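/- Let h ≥ 4 and let J_h be the instance on k = 2 routers consisting of: h packets of length 1 released at time 0 at router 1; h packets of length 2 released at time 2 at router 1; and 2h packets of length 1 released at time h + 3 at router 2. Then, for any tie-breaking rule, the maximum flow time of Greedy's schedule on J_h equals 3h − 2. -/

import Mathlib

/-!
# Packet forwarding on a line network

There are `k` active routers `1, …, k`; router `i` forwards packets to router `i+1`.
An instance is a finite collection of packets; packet `p` has a release time `rel p : ℕ`,
a start router `start p ∈ {1, …, k}` and a length `len p ≥ 1` with
`start p + len p − 1 ≤ k`; `p` must be forwarded by routers
`start p, start p + 1, …, start p + len p − 1` in this order.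
-/

/-- An instance of online packet forwarding on a line network with `k` active routers.
Packets are indexed by `Fin n`. -/
structure PInstance (k : ℕ) where
  n : ℕ
  rel : Fin n → ℕ
  start : Fin n → ℕ
  len : Fin n → ℕ

namespace PInstance

variable {k : ℕ}

/-- The instance is well-formed: start routers are at least `1`, lengths are at least `1`,
and every packet fits on the line: `start p + len p − 1 ≤ k`. -/
def Valid (I : PInstance k) : Prop :=
  ∀ p, 1 ≤ I.start p ∧ 1 ≤ I.len p ∧ I.start p + I.len p ≤ k + 1

/-- All packets of the instance have length `1` or `2`. -/
def Short (I : PInstance k) : Prop :=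
  ∀ p, I.len p = 1 ∨ I.len p = 2

/-- A schedule assigns to each packet `p` and each hop index `j < len p` (corresponding to
router `start p + j`) the time step at which that router forwards `p`.  Values at
hop indices `j ≥ len p` are irrelevant. -/
abbrev Sched (I : PInstance k) := Fin I.n → ℕ → ℕ

/-- `arr I S p j` is the time from which hop `j` of packet `p` is available:
packet `p` is available at its start router from time `rel p`, and a packet forwarded
at time `t` is available at the next router from time `t + 1`. -/
def arr (I : PInstance k) (S : Sched I) (p : Fin I.n) : ℕ → ℕ
  | 0 => I.rel p
  | j + 1 => S p j + 1

/-- Feasibility of a schedule: every hop is forwarded no earlier than the time from which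
it is available (this includes releases and the order of the hops), and each router
forwards at most one packet in each time step. -/
def Feasible (I : PInstance k) (S : Sched I) : Prop :=
  (∀ p j, j < I.len p → arr I S p j ≤ S p j) ∧
  (∀ p q jp jq, jp < I.len p → jq < I.len q →
    I.start p + jp = I.start q + jq → S p jp = S q jq → p = q)

/-- Completion time `C(p)`: one plus the time step in which the last router forwards `p`. -/
def comp (I : PInstance k) (S : Sched I) (p : Fin I.n) : ℕ :=
  S p (I.len p - 1) + 1

/-- Flow time of packet `p`: `C(p) − r(p)`. -/
def flowTime (I : PInstance k) (S : Sched I) (p : Fin I.n) : ℕ :=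
  comp I S p - I.rel p

/-- Cost of a schedule: the maximum flow time over all packets of the instance. -/
def cost (I : PInstance k) (S : Sched I) : ℕ :=
  Finset.univ.sup (flowTime I S)

/-- `Opt(I)`: the minimum cost over all feasible schedules. -/
noncomputable def opt (I : PInstance k) : ℕ :=
  sInf {c | ∃ S : Sched I, Feasible I S ∧ cost I S = c}

/-- Hop `j` of packet `p` is waiting (available but not yet forwarded) at time `t`. -/
def Waiting (I : PInstance k) (S : Sched I) (p : Fin I.n) (j t : ℕ) : Prop :=
  j < I.len p ∧ arr I S p j ≤ t ∧ t ≤ S p j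

/-- Remaining length `ℓ(p,t)`: the number of routers that still need to forward `p`
at time `t` (under schedule `S`). -/
noncomputable def remLen (I : PInstance k) (S : Sched I) (p : Fin I.n) (t : ℕ) : ℕ :=
  Set.ncard {j : ℕ | j < I.len p ∧ t ≤ S p j}

/-- Priority `π(p,t) = (t − r(p)) + ℓ(p,t)`. -/
noncomputable def prio (I : PInstance k) (S : Sched I) (p : Fin I.n) (t : ℕ) : ℕ :=
  (t - I.rel p) + remLen I S p t

/-- A schedule is zealous if, at every time step and every router at which some packet
is available (waiting), it forwards a packet there. -/
def Zealous (I : PInstance k) (S : Sched I) : Prop :=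
  ∀ t i, (∃ p j, Waiting I S p j t ∧ I.start p + j = i) →
    ∃ q jq, Waiting I S q jq t ∧ I.start q + jq = i ∧ S q jq = t

/-- `S` is a schedule that Greedy (with some tie-breaking rule) produces: it is feasible,
and in every time step, every router at which at least one packet is waiting forwards a
waiting packet of maximum priority among the packets waiting there. -/
def IsGreedy (I : PInstance k) (S : Sched I) : Prop :=
  Feasible I S ∧
  ∀ t i, (∃ p j, Waiting I S p j t ∧ I.start p + j = i) →
    ∃ q jq, Waiting I S q jq t ∧ I.start q + jq = i ∧ S q jq = t ∧
      ∀ p j, Waiting I S p j t → I.start p + j = i → prio I S p t ≤ prio I S q t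

/-- The number of packets released by time `t` that still need to be forwarded by
router `i` at time `t` under schedule `S`. -/
noncomputable def needs (I : PInstance k) (S : Sched I) (i t : ℕ) : ℕ :=
  Set.ncard {p : Fin I.n | I.rel p ≤ t ∧ ∃ j, j < I.len p ∧ I.start p + j = i ∧ t ≤ S p j}

end PInstance

/-- Build an instance from a list of packets, each given as a triple
(release time, start router, length). -/
def ofTriples (k : ℕ) (L : List (ℕ × ℕ × ℕ)) : PInstance k where
  n := L.length
  rel p := (L.get p).1
  start p := (L.get p).2.1
  len p := (L.get p).2.2

/-- The instance `J_h` on `k = 2` routers: `h` packets of length `1` released at time `0`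
at router `1`; `h` packets of length `2` released at time `2` at router `1`; and `2h`
packets of length `1` released at time `h + 3` at router `2`. -/
def Jh (h : ℕ) : PInstance 2 :=
  ofTriples 2 (List.replicate h (0, 1, 1) ++ List.replicate h (2, 1, 2)
    ++ List.replicate (2 * h) (h + 3, 2, 1))

/-!
Greedy's schedule on `J_h` is forced. At router 1 a waiting short packet has priority at least
`t + 1` and a long one at most `t`, so the short packets occupy times `0, …, h - 1` and the long
packets times `h, …, 2h - 1`; each long packet then crosses router 2 at once, since a waiting
late packet has lower priority. Router 2 is thus busy until time `2h`, so the `2h` late packets,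
released at `h + 3 ≤ 2h + 1`, are forwarded exactly at times `2h + 1, …, 4h`, and the last of
them has the largest flow time, `4h + 1 - (h + 3) = 3h - 2`. Each of these phases is a counting
argument: a router that never idles while packets of a group wait fills an interval whose
length is the size of the group.
-/

open PInstance Finset

lemma Fin.card_filter_mem_Ico {n a b : ℕ} (hb : b ≤ n) :
    #{i : Fin n | a ≤ (i : ℕ) ∧ (i : ℕ) < b} = b - a := by
  rw [← Nat.card_Ico, ← card_map Fin.valEmbedding]
  congr 1
  ext m
  simp only [mem_map, mem_filter, mem_univ, true_and, Fin.valEmbedding_apply, mem_Ico]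
  exact ⟨fun ⟨i, hi, him⟩ => him ▸ hi, fun hm => ⟨⟨m, hm.2.trans_le hb⟩, hm, rfl⟩⟩

lemma Finset.image_eq_Ico_of_injOn {α : Type*} {P : Finset α} {f : α → ℕ} {a b : ℕ}
    (hcard : #P = b - a) (hinj : Set.InjOn f P) (hge : ∀ p ∈ P, a ≤ f p)
    (hfill : ∀ t ∈ Ico a b, (∃ p ∈ P, t ≤ f p) → ∃ p ∈ P, f p = t) :
    P.image f = Ico a b := by
  have hsub : Ico a b ⊆ P.image f := by
    intro t ht
    by_contra hnot
    have hlt : ∀ p ∈ P, f p < t := fun p hp =>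
      lt_of_not_ge fun hle => hnot (mem_image.2 (hfill t ht ⟨p, hp, hle⟩))
    have hle := card_le_card_of_injOn f (fun p hp => mem_Ico.2 ⟨hge p hp, hlt p hp⟩) hinj
    rw [Nat.card_Ico] at hle
    rw [mem_Ico] at ht
    omega
  refine (eq_of_subset_of_card_le hsub ?_).symm
  rw [card_image_of_injOn hinj, Nat.card_Ico, hcard]

namespace PInstance

variable {k : ℕ} {I : PInstance k} {S : Sched I}

lemma remLen_le_len (p : Fin I.n) (t : ℕ) : remLen I S p t ≤ I.len p :=
  calc remLen I S p t ≤ (Set.Iio (I.len p)).ncard :=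
        Set.ncard_le_ncard (fun _ hj => hj.1) (Set.finite_Iio _)
    _ = I.len p := by simp

lemma remLen_pos {p : Fin I.n} {j t : ℕ} (hj : j < I.len p) (ht : t ≤ S p j) :
    0 < remLen I S p t :=
  (Set.ncard_pos ((Set.finite_Iio (I.len p)).subset fun _ hx => hx.1)).2 ⟨j, hj, ht⟩

lemma prio_le (p : Fin I.n) (t : ℕ) : prio I S p t ≤ t - I.rel p + I.len p :=
  Nat.add_le_add_left (remLen_le_len p t) _

lemma lt_prio {p : Fin I.n} {j t : ℕ} (hj : j < I.len p) (ht : t ≤ S p j) :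
    t - I.rel p < prio I S p t :=
  Nat.lt_add_of_pos_right (remLen_pos hj ht)

lemma Feasible.injOn_hop_zero (hF : Feasible I S) {P : Set (Fin I.n)} {i : ℕ}
    (hP : ∀ p ∈ P, I.start p = i ∧ 0 < I.len p) : Set.InjOn (S · 0) P :=
  fun p hp q hq hpq => hF.2 p q 0 0 (hP p hp).2 (hP q hq).2
    (by rw [(hP p hp).1, (hP q hq).1]) hpq

lemma IsGreedy.exists_forwarded (hG : IsGreedy I S) {p : Fin I.n} {j t : ℕ}
    (hw : Waiting I S p j t) :
    ∃ q jq, Waiting I S q jq t ∧ I.start q + jq = I.start p + j ∧ S q jq = t ∧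
      prio I S p t ≤ prio I S q t := by
  obtain ⟨q, jq, hwq, hr, hq, hmax⟩ := hG.2 t _ ⟨p, j, hw, rfl⟩
  exact ⟨q, jq, hwq, hr, hq, hmax p j hw rfl⟩

lemma flowTime_eq_of_len_eq_succ {p : Fin I.n} {n : ℕ} (hl : I.len p = n + 1) :
    flowTime I S p = S p n + 1 - I.rel p := by
  simp [flowTime, comp, hl]

lemma cost_eq_of_forall_le_of_exists {c : ℕ} (hle : ∀ p, flowTime I S p ≤ c)
    (hex : ∃ p, flowTime I S p = c) : cost I S = c := by
  obtain ⟨p, hp⟩ := hex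
  exact le_antisymm (Finset.sup_le fun q _ => hle q) (hp ▸ le_sup (mem_univ p))

end PInstance

section Jh

variable {h : ℕ}

lemma Jh.n_eq (h : ℕ) : (Jh h).n = 4 * h := by
  simp [Jh, ofTriples]; ring

lemma Jh.packet_eq (p : Fin (Jh h).n) :
    ((Jh h).rel p, (Jh h).start p, (Jh h).len p) =
      if (p : ℕ) < h then (0, 1, 1)
      else if (p : ℕ) < 2 * h then (2, 1, 2) else (h + 3, 2, 1) := by
  obtain ⟨m, hm⟩ := p
  have hm' : m < 4 * h := Jh.n_eq h ▸ hm
  show (List.replicate h (0, 1, 1) ++ List.replicate h (2, 1, 2)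
    ++ List.replicate (2 * h) (h + 3, 2, 1)).get ⟨m, hm⟩ = _
  simp only [List.get_eq_getElem, List.getElem_append, List.getElem_replicate, List.length_append,
    List.length_replicate]
  split_ifs <;> first | rfl | omega

lemma Jh.short_packet {p : Fin (Jh h).n} (hp : (p : ℕ) < h) :
    (Jh h).rel p = 0 ∧ (Jh h).start p = 1 ∧ (Jh h).len p = 1 := by
  simpa [hp] using Jh.packet_eq p

lemma Jh.long_packet {p : Fin (Jh h).n} (hp : h ≤ (p : ℕ)) (hp' : (p : ℕ) < 2 * h) :
    (Jh h).rel p = 2 ∧ (Jh h).start p = 1 ∧ (Jh h).len p = 2 := by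
  simpa [hp', not_lt.2 hp] using Jh.packet_eq p

lemma Jh.late_packet {p : Fin (Jh h).n} (hp : 2 * h ≤ (p : ℕ)) :
    (Jh h).rel p = h + 3 ∧ (Jh h).start p = 2 ∧ (Jh h).len p = 1 := by
  simpa [not_lt.2 hp, show ¬(p : ℕ) < h by omega] using Jh.packet_eq p

lemma Jh.router_one_cases {q : Fin (Jh h).n} {j : ℕ} (hr : (Jh h).start q + j = 1) :
    j = 0 ∧ (q : ℕ) < 2 * h := by
  rcases lt_or_ge (q : ℕ) h with hq | hq
  · have := Jh.short_packet hq; omega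
  rcases lt_or_ge (q : ℕ) (2 * h) with hq' | hq'
  · have := Jh.long_packet hq hq'; omega
  · have := Jh.late_packet hq'; omega

lemma Jh.router_two_cases {q : Fin (Jh h).n} {j : ℕ} (hj : j < (Jh h).len q)
    (hr : (Jh h).start q + j = 2) :
    (h ≤ (q : ℕ) ∧ (q : ℕ) < 2 * h ∧ j = 1) ∨ (2 * h ≤ (q : ℕ) ∧ j = 0) := by
  rcases lt_or_ge (q : ℕ) h with hq | hq
  · have := Jh.short_packet hq; omega
  rcases lt_or_ge (q : ℕ) (2 * h) with hq' | hq'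
  · have := Jh.long_packet hq hq'; omega
  · have := Jh.late_packet hq'; omega

lemma Jh.val_lt (p : Fin (Jh h).n) : (p : ℕ) < 4 * h :=
  Jh.n_eq h ▸ p.isLt

def Jh.packets (h a b : ℕ) : Finset (Fin (Jh h).n) := {p | a ≤ (p : ℕ) ∧ (p : ℕ) < b}

lemma Jh.mem_packets {a b : ℕ} {p : Fin (Jh h).n} :
    p ∈ Jh.packets h a b ↔ a ≤ (p : ℕ) ∧ (p : ℕ) < b := by
  simp [Jh.packets]

lemma Jh.card_packets {a b : ℕ} (hb : b ≤ 4 * h) : #(Jh.packets h a b) = b - a :=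
  Fin.card_filter_mem_Ico (Jh.n_eq h ▸ hb)

variable {S : Sched (Jh h)}

lemma Jh.injOn_hop_zero_of_le (hF : (Jh h).Feasible S) {a b : ℕ} (hb : b ≤ 2 * h) :
    Set.InjOn (S · 0) (Jh.packets h a b : Set (Fin (Jh h).n)) :=
  hF.injOn_hop_zero (i := 1) fun p hp => by
    have hp := Jh.mem_packets.1 hp
    rcases lt_or_ge (p : ℕ) h with h1 | h1
    · have := Jh.short_packet h1; omega
    · have := Jh.long_packet h1 (by omega); omega

lemma Jh.injOn_hop_zero_of_ge (hF : (Jh h).Feasible S) {a b : ℕ} (ha : 2 * h ≤ a) :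
    Set.InjOn (S · 0) (Jh.packets h a b : Set (Fin (Jh h).n)) :=
  hF.injOn_hop_zero (i := 2) fun p hp => by
    have := Jh.late_packet (ha.trans (Jh.mem_packets.1 hp).1); omega

lemma Jh.image_short (hG : (Jh h).IsGreedy S) :
    (Jh.packets h 0 h).image (S · 0) = Ico 0 h := by
  refine image_eq_Ico_of_injOn (Jh.card_packets (by omega))
    (Jh.injOn_hop_zero_of_le hG.1 (by omega)) (fun _ _ => Nat.zero_le _) ?_
  rintro t - ⟨p, hp, hpt⟩
  have hp := (Jh.mem_packets.1 hp).2
  obtain ⟨hpr, hps, hpl⟩ := Jh.short_packet hp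
  obtain ⟨q, jq, hwq, hr, hqt, hprio⟩ :=
    hG.exists_forwarded (p := p) (j := 0) (t := t) ⟨by omega, by simp [arr, hpr], hpt⟩
  obtain ⟨rfl, hq⟩ := Jh.router_one_cases (hr.trans (by omega))
  refine ⟨q, Jh.mem_packets.2 ⟨Nat.zero_le _, ?_⟩, hqt⟩
  -- a waiting long packet has priority at most `(t - 2) + 2`, a short one at least `t + 1`
  by_contra hqh
  obtain ⟨hqr, -, hql⟩ := Jh.long_packet (not_lt.1 hqh) hq
  have hrel : (Jh h).rel q ≤ t := hwq.2.1
  have := prio_le (S := S) q t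
  have := lt_prio (S := S) (by omega : 0 < (Jh h).len p) hpt
  omega

lemma Jh.image_long (hG : (Jh h).IsGreedy S) (hh : 2 ≤ h) :
    (Jh.packets h h (2 * h)).image (S · 0) = Ico h (2 * h) := by
  have hshort := Jh.image_short hG
  refine image_eq_Ico_of_injOn (Jh.card_packets (by omega)) (Jh.injOn_hop_zero_of_le hG.1 le_rfl)
    ?_ ?_
  · intro q hq
    have hq := Jh.mem_packets.1 hq
    by_contra! hlt
    obtain ⟨p, hp, hpq⟩ := mem_image.1 (hshort ▸ mem_Ico.2 ⟨Nat.zero_le _, hlt⟩)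
    have := Jh.mem_packets.1 hp
    have := Jh.injOn_hop_zero_of_le hG.1 (a := 0) (b := 2 * h) le_rfl
      (Jh.mem_packets.2 ⟨Nat.zero_le _, by omega⟩) (Jh.mem_packets.2 ⟨Nat.zero_le _, hq.2⟩)
      hpq
    omega
  rintro t ht ⟨p, hp, hpt⟩
  have hp := Jh.mem_packets.1 hp
  have ht := mem_Ico.1 ht
  obtain ⟨hpr, hps, hpl⟩ := Jh.long_packet hp.1 hp.2
  obtain ⟨q, jq, hwq, hr, hqt, -⟩ :=
    hG.exists_forwarded (p := p) (j := 0) (t := t) ⟨by omega, by simp [arr, hpr]; omega, hpt⟩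
  obtain ⟨rfl, hq⟩ := Jh.router_one_cases (hr.trans (by omega))
  refine ⟨q, Jh.mem_packets.2 ⟨?_, hq⟩, hqt⟩
  by_contra! hqh
  have := mem_Ico.1 (hshort ▸
    mem_image_of_mem (S · 0) (Jh.mem_packets.2 ⟨Nat.zero_le _, hqh⟩))
  omega

lemma Jh.long_hop_one (hG : (Jh h).IsGreedy S) {q : Fin (Jh h).n} (hq : h ≤ (q : ℕ))
    (hq' : (q : ℕ) < 2 * h) : S q 1 = S q 0 + 1 := by
  suffices ∀ m, ∀ q : Fin (Jh h).n, h ≤ (q : ℕ) → (q : ℕ) < 2 * h → S q 0 = m →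
      S q 1 = m + 1 from this _ q hq hq' rfl
  intro m
  induction m using Nat.strong_induction_on with
  | _ m IH =>
  intro q hq hq' hm
  obtain ⟨hqr, hqs, hql⟩ := Jh.long_packet hq hq'
  have hle : m + 1 ≤ S q 1 := hm ▸ hG.1.1 q 1 (by omega)
  obtain ⟨q', j', hw', hr, hq't, hprio⟩ :=
    hG.exists_forwarded (p := q) (j := 1) (t := m + 1) ⟨by omega, by simp [arr, hm], hle⟩
  rcases Jh.router_two_cases hw'.1 (hr.trans (by omega)) with ⟨h1, h2, rfl⟩ | ⟨h3, rfl⟩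
  · have harr : S q' 0 + 1 ≤ m + 1 := hw'.2.1
    rcases (Nat.le_of_succ_le_succ harr).lt_or_eq with hlt | heq
    · have := IH _ hlt q' h1 h2 rfl
      omega
    · rwa [Jh.injOn_hop_zero_of_le hG.1 le_rfl (Jh.mem_packets.2 ⟨h1, h2⟩)
        (Jh.mem_packets.2 ⟨hq, hq'⟩) (heq.trans hm.symm)] at hq't
  · -- a waiting late packet has priority at most `(m + 1 - (h + 3)) + 1`, below that of `q`
    obtain ⟨hcr, -, hcl⟩ := Jh.late_packet h3
    have hrel : (Jh h).rel q' ≤ m + 1 := hw'.2.1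
    have := prio_le (S := S) q' (m + 1)
    have := lt_prio (S := S) (by omega : 1 < (Jh h).len q) hle
    omega

lemma Jh.late_hop_zero_ge (hG : (Jh h).IsGreedy S) (hh : 2 ≤ h) {c : Fin (Jh h).n}
    (hc : 2 * h ≤ (c : ℕ)) : 2 * h + 1 ≤ S c 0 := by
  obtain ⟨hcr, hcs, hcl⟩ := Jh.late_packet hc
  have hrel : h + 3 ≤ S c 0 := hcr ▸ hG.1.1 c 0 (by omega)
  by_contra! hlt
  obtain ⟨q, hq, hqt⟩ :=
    mem_image.1 (Jh.image_long hG hh ▸ mem_Ico.2 ⟨(by omega : h ≤ S c 0 - 1), by omega⟩)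
  have hq := Jh.mem_packets.1 hq
  obtain ⟨-, hqs, hql⟩ := Jh.long_packet hq.1 hq.2
  have hq1 := Jh.long_hop_one hG hq.1 hq.2
  have := congrArg Fin.val (hG.1.2 c q 0 1 (by omega) (by omega) (by omega) (by omega))
  omega

lemma Jh.image_late (hG : (Jh h).IsGreedy S) (hh : 2 ≤ h) :
    (Jh.packets h (2 * h) (4 * h)).image (S · 0) = Ico (2 * h + 1) (4 * h + 1) := by
  refine image_eq_Ico_of_injOn ((Jh.card_packets le_rfl).trans (by omega))
    (Jh.injOn_hop_zero_of_ge hG.1 le_rfl)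
    (fun c hc => Jh.late_hop_zero_ge hG hh (Jh.mem_packets.1 hc).1) ?_
  rintro t ht ⟨p, hp, hpt⟩
  have hp := Jh.mem_packets.1 hp
  have ht := mem_Ico.1 ht
  obtain ⟨hpr, hps, hpl⟩ := Jh.late_packet hp.1
  obtain ⟨q, j, hwq, hr, hqt, -⟩ :=
    hG.exists_forwarded (p := p) (j := 0) (t := t) ⟨by omega, by simp [arr, hpr]; omega, hpt⟩
  rcases Jh.router_two_cases hwq.1 (hr.trans (by omega)) with ⟨h1, h2, rfl⟩ | ⟨h3, rfl⟩
  · have := mem_Ico.1 (Jh.image_long hG hh ▸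
      mem_image_of_mem (S · 0) (Jh.mem_packets.2 ⟨h1, h2⟩))
    have := Jh.long_hop_one hG h1 h2
    omega
  · exact ⟨q, Jh.mem_packets.2 ⟨h3, Jh.val_lt q⟩, hqt⟩

lemma Jh.flowTime_le (hG : (Jh h).IsGreedy S) (hh : 2 ≤ h) (p : Fin (Jh h).n) :
    (Jh h).flowTime S p ≤ 3 * h - 2 := by
  rcases lt_or_ge (p : ℕ) h with h1 | h1
  · obtain ⟨hpr, -, hpl⟩ := Jh.short_packet h1
    have := mem_Ico.1 (Jh.image_short hG ▸
      mem_image_of_mem (S · 0) (Jh.mem_packets.2 ⟨Nat.zero_le _, h1⟩))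
    rw [flowTime_eq_of_len_eq_succ (n := 0) hpl, hpr]
    omega
  rcases lt_or_ge (p : ℕ) (2 * h) with h2 | h2
  · obtain ⟨hpr, -, hpl⟩ := Jh.long_packet h1 h2
    have := mem_Ico.1 (Jh.image_long hG hh ▸
      mem_image_of_mem (S · 0) (Jh.mem_packets.2 ⟨h1, h2⟩))
    rw [flowTime_eq_of_len_eq_succ (n := 1) hpl, hpr, Jh.long_hop_one hG h1 h2]
    omega
  · obtain ⟨hpr, -, hpl⟩ := Jh.late_packet h2
    have := mem_Ico.1 (Jh.image_late hG hh ▸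
      mem_image_of_mem (S · 0) (Jh.mem_packets.2 ⟨h2, Jh.val_lt p⟩))
    rw [flowTime_eq_of_len_eq_succ (n := 0) hpl, hpr]
    omega

lemma Jh.exists_flowTime_eq (hG : (Jh h).IsGreedy S) (hh : 2 ≤ h) :
    ∃ p, (Jh h).flowTime S p = 3 * h - 2 := by
  obtain ⟨c, hc, hct⟩ := mem_image.1 (Jh.image_late hG hh ▸
    mem_Ico.2 (by omega : 2 * h + 1 ≤ 4 * h ∧ 4 * h < 4 * h + 1))
  obtain ⟨hcr, -, hcl⟩ := Jh.late_packet (Jh.mem_packets.1 hc).1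
  refine ⟨c, ?_⟩
  rw [flowTime_eq_of_len_eq_succ (n := 0) hcl, hcr, hct]
  omega

end Jh

/-- Let `h ≥ 4`.  Then, for any tie-breaking rule (i.e. for any schedule
`S` that Greedy can produce on `J_h`), the maximum flow time of Greedy's schedule on `J_h`
equals `3h − 2`. -/
theorem greedy_cost_Jh (h : ℕ) (hh : 4 ≤ h)
    (S : PInstance.Sched (Jh h)) (hG : (Jh h).IsGreedy S) :
    (Jh h).cost S = 3 * h - 2 :=
  cost_eq_of_forall_le_of_exists (Jh.flowTime_le hG (by omega))
    (Jh.exists_flowTime_eq hG (by omega))
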